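/- arXiv:2107.13174 — 6 statements merged into one kernel-verified Lean document; each statement's English description precedes it below -/
import Mathlib

section
/- Let H = (V, E) be a simple graph with V = {v_1, …, v_n}, n ≥ 2, and let k with 1 ≤ k ≤ n. Construct the temporal network G = (V', K, 1) where V' = V ∪ {v†} ∪ {u^i_j : 1 ≤ i ≤ n, 1 ≤ j ≤ n−k+1} (all the new nodes pairwise distinct and distinct from the nodes of V), and K = {(v_i, u^i_j, 0) : 1 ≤ i ≤ n, 1 ≤ j ≤ n−k+1} ∪ {(v†, v_i, 0) : 1 ≤ i ≤ n}. Let Â = {(v_i, v_j, 0) : {v_i, v_j} ∈ E}. Then there exists A* ⊆ Â with |A*| ≤ k(k−1)/2 such that at least k nodes of V' have strictly more contacts than v† in G ∪ A*, if and only if H contains a clique on k vertices. -/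
open Finset
open scoped Classical

section AuxCombinatorics

lemma card_filter_mem_two {V : Type*} [Fintype V] (e : Sym2 V) (he : ¬ e.IsDiag) :
    (Finset.univ.filter (fun v => v ∈ e)).card = 2 := by
  induction e using Sym2.ind with
  | _ a b =>
    rw [Sym2.mk_isDiag_iff] at he
    have h : Finset.univ.filter (fun v => v ∈ (s(a,b) : Sym2 V)) = {a, b} := by
      ext v; simp [Sym2.mem_iff]
    rw [h, Finset.card_insert_of_notMem (by simp [he]), Finset.card_singleton]

lemma handshake {V : Type*} [Fintype V] (B : Finset (Sym2 V)) (hB : ∀ e ∈ B, ¬ e.IsDiag) :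
    ∑ v, (B.filter (fun e => v ∈ e)).card = 2 * B.card := by
  have h1 : ∀ v : V, (B.filter (fun e => v ∈ e)).card = ∑ e ∈ B, if v ∈ e then 1 else 0 :=
    fun v => Finset.card_filter _ _
  simp_rw [h1]
  rw [Finset.sum_comm]
  rw [Finset.sum_congr rfl
      (fun e he => (Finset.card_filter _ _).symm.trans (card_filter_mem_two e (hB e he))),
    Finset.sum_const, smul_eq_mul, mul_comm]

lemma clique_of_degrees {V : Type*} [Fintype V] (H : SimpleGraph V) (k : ℕ) (hk : 1 ≤ k)
    (B : Finset (Sym2 V)) (hB : B ⊆ H.edgeFinset) (hcard : B.card ≤ k * (k-1) / 2)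
    (S : Finset V) (hS : S.card = k)
    (hdeg : ∀ v ∈ S, k - 1 ≤ (B.filter (fun e => v ∈ e)).card) :
    ∀ u ∈ S, ∀ v ∈ S, u ≠ v → H.Adj u v := by
  have hnd : ∀ e ∈ B, ¬ e.IsDiag := fun e he =>
    H.not_isDiag_of_mem_edgeSet (SimpleGraph.mem_edgeFinset.mp (hB he))
  have hhs := handshake B hnd
  have h2B : 2 * B.card ≤ k * (k - 1) := by
    have h := Nat.div_mul_le_self (k*(k-1)) 2
    set m := k * (k-1) with hm
    omega
  have key : ∑ v ∈ S, (B.filter (fun e => v ∈ e)).card ≤ 2 * B.card := by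
    rw [← hhs]
    exact Finset.sum_le_sum_of_subset (Finset.subset_univ S)
  have hlow : k * (k-1) ≤ ∑ v ∈ S, (B.filter (fun e => v ∈ e)).card := by
    have := Finset.card_nsmul_le_sum S (fun v => (B.filter (fun e => v ∈ e)).card) (k-1) hdeg
    rw [hS] at this
    simpa [smul_eq_mul] using this
  have hsumS : ∑ v ∈ S, (B.filter (fun e => v ∈ e)).card = k * (k-1) :=
    le_antisymm (key.trans h2B) hlow
  have hsumU : ∑ v, (B.filter (fun e => v ∈ e)).card = k * (k-1) := by
    have h1 : ∑ v ∈ S, (B.filter (fun e => v ∈ e)).card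
        ≤ ∑ v, (B.filter (fun e => v ∈ e)).card :=
      Finset.sum_le_sum_of_subset (Finset.subset_univ S)
    linarith [hhs, h2B, hsumS]
  have hzero : ∀ w, w ∉ S → (B.filter (fun e => w ∈ e)).card = 0 := by
    intro w hw
    have hsd : ∑ v ∈ Finset.univ \ S, (B.filter (fun e => v ∈ e)).card = 0 := by
      have h3 : ∑ v ∈ Finset.univ \ S, (B.filter (fun e => v ∈ e)).card
          + ∑ v ∈ S, (B.filter (fun e => v ∈ e)).card
          = ∑ v, (B.filter (fun e => v ∈ e)).card :=
        Finset.sum_sdiff (Finset.subset_univ S)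
      linarith [hsumS, hsumU]
    have := (Finset.sum_eq_zero_iff.mp hsd) w (by simp [hw])
    exact this
  have hexact : ∀ v ∈ S, (B.filter (fun e => v ∈ e)).card = k - 1 := by
    intro v hv
    by_contra hne
    have hgt : k - 1 + 1 ≤ (B.filter (fun e => v ∈ e)).card := by
      have := hdeg v hv; omega
    have herase : (k - 1) * (k-1) ≤ ∑ x ∈ S.erase v, (B.filter (fun e => x ∈ e)).card := by
      have := Finset.card_nsmul_le_sum (S.erase v)
        (fun x => (B.filter (fun e => x ∈ e)).card) (k-1)
        (fun x hx => hdeg x (Finset.mem_of_mem_erase hx))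
      rw [Finset.card_erase_of_mem hv, hS] at this
      simpa [smul_eq_mul] using this
    have hsplit : (B.filter (fun e => v ∈ e)).card
        + ∑ x ∈ S.erase v, (B.filter (fun e => x ∈ e)).card
        = ∑ x ∈ S, (B.filter (fun e => x ∈ e)).card :=
      Finset.add_sum_erase S (fun x => (B.filter (fun e => x ∈ e)).card) hv
    have hq : k * (k-1) = (k-1)*(k-1) + (k-1) := by
      cases k with
      | zero => omega
      | succ m => simp [Nat.succ_sub_one]; ring
    linarith [hsumS]
  intro u hu v hv huv
  set Fu := B.filter (fun e => u ∈ e) with hFu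
  have hmemu : ∀ e ∈ Fu, u ∈ e := fun e he => (Finset.mem_filter.mp he).2
  set g : Sym2 V → V := fun e => if h : u ∈ e then Sym2.Mem.other' h else u with hgdef
  have hg : ∀ (e : Sym2 V) (h : u ∈ e), g e = Sym2.Mem.other' h := by
    intro e h; rw [hgdef]; exact dif_pos h
  have hspec : ∀ e ∈ Fu, s(u, g e) = e := by
    intro e he
    have h := hmemu e he
    rw [hg e h]
    exact Sym2.other_spec' h
  have hginj : Set.InjOn g Fu := by
    intro e1 h1 e2 h2 hgh
    rw [← hspec e1 h1, ← hspec e2 h2, hgh]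
  have himg : Fu.image g ⊆ S.erase u := by
    intro x hx
    obtain ⟨e, he, rfl⟩ := Finset.mem_image.mp hx
    have hue := hmemu e he
    have heB : e ∈ B := (Finset.mem_filter.mp he).1
    have hxe : g e ∈ e := by rw [hg e hue]; exact Sym2.other_mem' hue
    have hne : g e ≠ u := by
      intro h
      apply hnd e heB
      rw [← hspec e he, h]
      simp
    have hxS : g e ∈ S := by
      by_contra hxs
      have h0 := hzero _ hxs
      rw [Finset.card_eq_zero, Finset.filter_eq_empty_iff] at h0
      exact h0 heB hxe
    exact Finset.mem_erase.mpr ⟨hne, hxS⟩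
  have hcardimg : (Fu.image g).card = k - 1 := by
    rw [Finset.card_image_of_injOn hginj]; exact hexact u hu
  have heq : Fu.image g = S.erase u :=
    Finset.eq_of_subset_of_card_le himg
      (by rw [hcardimg, Finset.card_erase_of_mem hu, hS])
  have hvmem : v ∈ Fu.image g := by
    rw [heq]; exact Finset.mem_erase.mpr ⟨huv.symm, hv⟩
  obtain ⟨e, he, hge⟩ := Finset.mem_image.mp hvmem
  have hsuv : s(u, v) = e := by rw [← hge]; exact hspec e he
  have hsB : s(u, v) ∈ H.edgeFinset := hB (hsuv ▸ (Finset.mem_filter.mp he).1)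
  exact (SimpleGraph.mem_edgeFinset.mp hsB)

end AuxCombinatorics


/-- A contact of a temporal network: an undirected pair of nodes together with a time. -/
abbrev Contact (V : Type*) := Sym2 V × ℕ

/-- The contacts of node `v` in the contact set `K`. -/
noncomputable def contactsOf {V : Type*} (K : Finset (Contact V)) (v : V) : Finset (Contact V) :=
  K.filter (fun c => v ∈ c.1)

/-- A time-respecting path from `v` to `w` in the contact set `K`, realized as a nonempty
list of directed steps `(a, b, t)` traversing pairwise distinct contacts of `K`,
where each step ends where the next one starts and times strictly increase. -/
def IsTRPathFrom {V : Type*} (K : Finset (Contact V)) (v w : V)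
    (l : List (V × V × ℕ)) : Prop :=
  l ≠ [] ∧
  (∀ p ∈ l, ((s(p.1, p.2.1), p.2.2) : Contact V) ∈ K) ∧
  l.Chain' (fun p q => p.2.1 = q.1 ∧ p.2.2 < q.2.2) ∧
  (l.map (fun p => ((s(p.1, p.2.1), p.2.2) : Contact V))).Nodup ∧
  l.head?.map Prod.fst = some v ∧
  l.getLast?.map (fun p => p.2.1) = some w

/-- A path (list of directed steps) passes through a node `x` if `x` appears
in one of its contacts. -/
def PassesThrough {V : Type*} (x : V) (l : List (V × V × ℕ)) : Prop :=
  ∃ p ∈ l, x = p.1 ∨ x = p.2.1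

namespace DegreeNPC

variable (V : Type*) [Fintype V] (n k : ℕ)

/-- The node set `V' = V ∪ {v†} ∪ {uᵢⱼ}` of the constructed temporal network. -/
abbrev Nodes := V ⊕ Unit ⊕ (V × Fin (n - k + 1))

/-- A node `vᵢ` of the original graph. -/
def orig (v : V) : Nodes V n k := Sum.inl v

/-- The evader `v†`. -/
def vdag : Nodes V n k := Sum.inr (Sum.inl ())

/-- The auxiliary node `uᵢⱼ` (for `vᵢ : V` and `j : Fin (n - k + 1)`). -/
def aux (p : V × Fin (n - k + 1)) : Nodes V n k := Sum.inr (Sum.inr p)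

/-- The contact set `K` of the constructed temporal network (all contacts at moment 0):
each `vᵢ` contacts each of its `uᵢⱼ`'s, and `v†` contacts each `vᵢ`. -/
noncomputable def Kc : Finset (Contact (Nodes V n k)) :=
  (Finset.univ.image fun p : V × Fin (n - k + 1) =>
      ((s(orig V n k p.1, aux V n k p), 0) : Contact (Nodes V n k)))
  ∪ (Finset.univ.image fun v : V =>
      ((s(vdag V n k, orig V n k v), 0) : Contact (Nodes V n k)))

/-- The set `Â` of contacts allowed to be added: the edges of `H`, all at moment 0. -/
noncomputable def Ahat (H : SimpleGraph V) : Finset (Contact (Nodes V n k)) :=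
  H.edgeFinset.image (fun e => (e.map (orig V n k), 0))


section
variable {V} {n k}

lemma orig_inj : Function.Injective (orig V n k) := fun _ _ h => Sum.inl.inj h

/-- The map sending an edge of `H` to the corresponding extra contact. -/
noncomputable def fC (V : Type*) (n k : ℕ) (e : Sym2 V) : Contact (Nodes V n k) :=
  (e.map (orig V n k), 0)

lemma fC_inj : Function.Injective (fC V n k) := fun e1 e2 h =>
  Sym2.map.injective orig_inj (congrArg Prod.fst h)

lemma card_Kc_vdag : (contactsOf (Kc V n k) (vdag V n k)).card = Fintype.card V := by
  have h : contactsOf (Kc V n k) (vdag V n k)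
      = Finset.univ.image (fun v : V =>
          ((s(vdag V n k, orig V n k v), 0) : Contact (Nodes V n k))) := by
    unfold contactsOf Kc
    simp only [Finset.filter_union, Finset.filter_image]
    ext c
    simp [orig, vdag, aux, Sym2.mem_iff]
  rw [h, Finset.card_image_of_injective _ (fun a b hab => by
    simpa [Prod.ext_iff, Sym2.eq_iff, orig, vdag] using hab), Finset.card_univ]

lemma card_Kc_aux (q : V × Fin (n - k + 1)) :
    (contactsOf (Kc V n k) (aux V n k q)).card = 1 := by
  have h : contactsOf (Kc V n k) (aux V n k q)
      = {((s(orig V n k q.1, aux V n k q), 0) : Contact (Nodes V n k))} := by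
    unfold contactsOf Kc
    simp only [Finset.filter_union, Finset.filter_image]
    ext c
    simp only [Finset.mem_union, Finset.mem_image, Finset.mem_filter, Finset.mem_univ,
      true_and, Finset.mem_singleton]
    constructor
    · rintro (⟨p, hp, rfl⟩ | ⟨v, hv, rfl⟩)
      · simp only [Sym2.mem_iff, aux, orig] at hp
        rcases hp with h | h
        · exact absurd h (by simp)
        · obtain rfl : q = p := by simpa using h
          rfl
      · simp [Sym2.mem_iff, aux, orig, vdag] at hv
    · rintro rfl
      exact Or.inl ⟨q, by simp [Sym2.mem_iff], rfl⟩
  rw [h, Finset.card_singleton]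

lemma card_Kc_orig (v : V) :
    (contactsOf (Kc V n k) (orig V n k v)).card = (n - k + 1) + 1 := by
  have h : contactsOf (Kc V n k) (orig V n k v)
      = ((Finset.univ : Finset (Fin (n-k+1))).image (fun j =>
          ((s(orig V n k v, aux V n k (v, j)), 0) : Contact (Nodes V n k))))
        ∪ {((s(vdag V n k, orig V n k v), 0) : Contact (Nodes V n k))} := by
    unfold contactsOf Kc
    simp only [Finset.filter_union, Finset.filter_image]
    ext c
    simp only [Finset.mem_union, Finset.mem_image, Finset.mem_filter, Finset.mem_univ,
      true_and, Finset.mem_singleton]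
    constructor
    · rintro (⟨p, hp, rfl⟩ | ⟨w, hw, rfl⟩)
      · simp only [Sym2.mem_iff, aux, orig] at hp
        rcases hp with h | h
        · obtain rfl : v = p.1 := by simpa using h
          exact Or.inl ⟨p.2, rfl⟩
        · exact absurd h (by simp)
      · obtain rfl : v = w := by
          simpa [Sym2.mem_iff, orig, vdag] using hw
        exact Or.inr rfl
    · rintro (⟨j, rfl⟩ | rfl)
      · exact Or.inl ⟨(v, j), by simp [Sym2.mem_iff], rfl⟩
      · exact Or.inr ⟨v, by simp [Sym2.mem_iff], rfl⟩
  rw [h, Finset.card_union_of_disjoint, Finset.card_image_of_injective, Finset.card_univ,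
    Fintype.card_fin, Finset.card_singleton]
  · intro a b hab
    simpa [Prod.ext_iff, Sym2.eq_iff, orig, aux] using hab
  · rw [Finset.disjoint_singleton_right]
    simp only [Finset.mem_image]
    rintro ⟨j, hj, hc⟩
    simp [Prod.ext_iff, Sym2.eq_iff, orig, aux, vdag] at hc

lemma Ahat_nodes {H : SimpleGraph V} {A : Finset (Contact (Nodes V n k))}
    (hA : A ⊆ Ahat V n k H) {c : Contact (Nodes V n k)} (hc : c ∈ A)
    {x : Nodes V n k} (hx : x ∈ c.1) : ∃ v : V, x = orig V n k v := by
  obtain ⟨e, he, rfl⟩ := Finset.mem_image.mp (hA hc)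
  obtain ⟨a, ha, rfl⟩ := Sym2.mem_map.mp hx
  exact ⟨a, rfl⟩

lemma contactsOf_A_vdag {H : SimpleGraph V} {A : Finset (Contact (Nodes V n k))}
    (hA : A ⊆ Ahat V n k H) : contactsOf A (vdag V n k) = ∅ := by
  rw [Finset.eq_empty_iff_forall_notMem]
  intro c hc
  simp only [contactsOf, Finset.mem_filter] at hc
  obtain ⟨v, hv⟩ := Ahat_nodes hA hc.1 hc.2
  simp [vdag, orig] at hv

lemma contactsOf_A_aux {H : SimpleGraph V} {A : Finset (Contact (Nodes V n k))}
    (hA : A ⊆ Ahat V n k H) (q : V × Fin (n - k + 1)) : contactsOf A (aux V n k q) = ∅ := by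
  rw [Finset.eq_empty_iff_forall_notMem]
  intro c hc
  simp only [contactsOf, Finset.mem_filter] at hc
  obtain ⟨v, hv⟩ := Ahat_nodes hA hc.1 hc.2
  simp [aux, orig] at hv

lemma disjoint_Kc_A {H : SimpleGraph V} {A : Finset (Contact (Nodes V n k))}
    (hA : A ⊆ Ahat V n k H) : Disjoint (Kc V n k) A := by
  rw [Finset.disjoint_left]
  intro c hcK hcA
  rw [Kc, Finset.mem_union] at hcK
  rcases hcK with h | h
  · obtain ⟨p, _, rfl⟩ := Finset.mem_image.mp h
    obtain ⟨v, hv⟩ := Ahat_nodes hA hcA (x := aux V n k p) (by simp [Sym2.mem_iff])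
    simp [aux, orig] at hv
  · obtain ⟨w, _, rfl⟩ := Finset.mem_image.mp h
    obtain ⟨v, hv⟩ := Ahat_nodes hA hcA (x := vdag V n k) (by simp [Sym2.mem_iff])
    simp [vdag, orig] at hv

lemma card_union_contacts {H : SimpleGraph V} {A : Finset (Contact (Nodes V n k))}
    (hA : A ⊆ Ahat V n k H) (x : Nodes V n k) :
    (contactsOf (Kc V n k ∪ A) x).card
      = (contactsOf (Kc V n k) x).card + (contactsOf A x).card := by
  unfold contactsOf
  simp only [Finset.filter_union]
  refine Finset.card_union_of_disjoint ?_
  rw [Finset.disjoint_left]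
  intro c hc1 hc2
  simp only [Finset.mem_filter] at hc1 hc2
  exact Finset.disjoint_left.mp (disjoint_Kc_A hA) hc1.1 hc2.1

lemma contactsOf_image_orig (B : Finset (Sym2 V)) (v : V) :
    contactsOf (B.image (fC V n k)) (orig V n k v)
      = (B.filter (fun e => v ∈ e)).image (fC V n k) := by
  ext c
  simp only [contactsOf, Finset.mem_filter, Finset.mem_image]
  constructor
  · rintro ⟨⟨e, he, rfl⟩, hv⟩
    refine ⟨e, ⟨he, ?_⟩, rfl⟩
    obtain ⟨a, ha, haa⟩ := Sym2.mem_map.mp hv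
    exact (orig_inj haa) ▸ ha
  · rintro ⟨e, ⟨he, hv⟩, rfl⟩
    exact ⟨⟨e, he, rfl⟩, Sym2.mem_map.mpr ⟨v, hv, rfl⟩⟩

lemma card_contactsOf_image_orig (B : Finset (Sym2 V)) (v : V) :
    (contactsOf (B.image (fC V n k)) (orig V n k v)).card
      = (B.filter (fun e => v ∈ e)).card := by
  rw [contactsOf_image_orig, Finset.card_image_of_injective _ fC_inj]

lemma A_eq_image {H : SimpleGraph V} {A : Finset (Contact (Nodes V n k))}
    (hA : A ⊆ Ahat V n k H) :
    A = (H.edgeFinset.filter (fun e => fC V n k e ∈ A)).image (fC V n k) := by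
  ext c
  simp only [Finset.mem_image, Finset.mem_filter]
  constructor
  · intro hc
    obtain ⟨e, he, rfl⟩ := Finset.mem_image.mp (hA hc)
    exact ⟨e, ⟨he, hc⟩, rfl⟩
  · rintro ⟨e, ⟨he, hc⟩, rfl⟩
    exact hc


end

theorem stmt4 {V : Type*} [Fintype V] (H : SimpleGraph V) (n k : ℕ)
    (hn : Fintype.card V = n) (hn2 : 2 ≤ n) (hk1 : 1 ≤ k) (hkn : k ≤ n) :
    (∃ A ⊆ Ahat V n k H, A.card ≤ k * (k - 1) / 2 ∧
      k ≤ (Finset.univ.filter (fun x : Nodes V n k =>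
            (contactsOf (Kc V n k ∪ A) (vdag V n k)).card <
            (contactsOf (Kc V n k ∪ A) x).card)).card) ↔
    (∃ S : Finset V, S.card = k ∧ ∀ u ∈ S, ∀ v ∈ S, u ≠ v → H.Adj u v) := by
  constructor
  · rintro ⟨A, hA, hAcard, hk'⟩
    set B := H.edgeFinset.filter (fun e => fC V n k e ∈ A) with hBdef
    have hAeq : A = B.image (fC V n k) := A_eq_image hA
    have hBsub : B ⊆ H.edgeFinset := Finset.filter_subset _ _
    have hBcard : B.card ≤ k * (k - 1) / 2 := by
      rw [hAeq, Finset.card_image_of_injective _ fC_inj] at hAcard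
      exact hAcard
    have hvd : (contactsOf (Kc V n k ∪ A) (vdag V n k)).card = n := by
      rw [card_union_contacts hA, card_Kc_vdag, contactsOf_A_vdag hA, Finset.card_empty, Nat.add_zero, hn]
    have hsub : (Finset.univ.filter (fun x : Nodes V n k =>
        (contactsOf (Kc V n k ∪ A) (vdag V n k)).card < (contactsOf (Kc V n k ∪ A) x).card))
        ⊆ (Finset.univ.filter
            (fun v : V => k - 1 ≤ (B.filter (fun e => v ∈ e)).card)).image (orig V n k) := by
      intro x hx
      have hx' := (Finset.mem_filter.mp hx).2
      rw [hvd] at hx'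
      rcases x with v | u | q
      · have hxc : (contactsOf (Kc V n k ∪ A) (orig V n k v)).card
            = (n - k + 1 + 1) + (B.filter (fun e => v ∈ e)).card := by
          rw [card_union_contacts hA, card_Kc_orig, hAeq, card_contactsOf_image_orig]
        rw [show (Sum.inl v : Nodes V n k) = orig V n k v from rfl, hxc] at hx'
        refine Finset.mem_image.mpr ⟨v, Finset.mem_filter.mpr ⟨Finset.mem_univ v, ?_⟩, rfl⟩
        omega
      · exfalso
        cases u
        rw [show (Sum.inr (Sum.inl ()) : Nodes V n k) = vdag V n k from rfl, hvd] at hx'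
        exact lt_irrefl _ hx'
      · exfalso
        rw [show (Sum.inr (Sum.inr q) : Nodes V n k) = aux V n k q from rfl,
          card_union_contacts hA, card_Kc_aux, contactsOf_A_aux hA, Finset.card_empty] at hx'
        omega
    have hk2 : k ≤ (Finset.univ.filter
        (fun v : V => k - 1 ≤ (B.filter (fun e => v ∈ e)).card)).card := by
      exact le_trans hk' (le_trans (Finset.card_le_card hsub) Finset.card_image_le)
    obtain ⟨S, hSsub, hScard⟩ := Finset.exists_subset_card_eq hk2
    exact ⟨S, hScard, clique_of_degrees H k hk1 B hBsub hBcard S hScard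
      (fun v hv => (Finset.mem_filter.mp (hSsub hv)).2)⟩
  · rintro ⟨S, hScard, hclique⟩
    set B₀ := S.sym2.filter (fun e => ¬ e.IsDiag) with hB0def
    have hB0sub : B₀ ⊆ H.edgeFinset := by
      intro e he
      induction e using Sym2.ind with
      | _ a b =>
        rw [hB0def, Finset.mem_filter, Finset.mk_mem_sym2_iff, Sym2.mk_isDiag_iff] at he
        exact SimpleGraph.mem_edgeFinset.mpr (hclique a he.1.1 b he.1.2 he.2)
    set A := B₀.image (fC V n k) with hAdef
    have hA : A ⊆ Ahat V n k H := Finset.image_subset_image hB0sub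
    have hdiag : S.sym2.filter (fun e => e.IsDiag) = S.image Sym2.diag := by
      ext e
      induction e using Sym2.ind with
      | _ a b =>
        simp only [Finset.mem_filter, Finset.mk_mem_sym2_iff, Sym2.mk_isDiag_iff,
          Finset.mem_image, Sym2.diag, Sym2.eq_iff]
        constructor
        · rintro ⟨⟨ha, hb⟩, rfl⟩
          exact ⟨a, ha, Or.inl ⟨rfl, rfl⟩⟩
        · rintro ⟨x, hx, (⟨rfl, rfl⟩ | ⟨rfl, rfl⟩)⟩ <;> exact ⟨⟨hx, hx⟩, rfl⟩
    have hB0card : B₀.card = k * (k - 1) / 2 := by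
      have hsplit : (S.sym2.filter (fun e => e.IsDiag)).card + B₀.card = S.sym2.card := by
        rw [hB0def]
        exact Finset.card_filter_add_card_filter_not _
      rw [hdiag, Finset.card_image_of_injective _ Sym2.diag_injective, hScard,
        Finset.card_sym2, hScard] at hsplit
      have hch : (k + 1).choose 2 = (k + 1) * k / 2 := by
        rw [Nat.choose_two_right]
        simp
      rw [hch] at hsplit
      obtain ⟨a, ha⟩ : 2 ∣ (k + 1) * k := by
        rw [mul_comm]
        exact (Nat.even_mul_succ_self k).two_dvd
      obtain ⟨b, hb⟩ : 2 ∣ k * (k - 1) := by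
        cases k with
        | zero => simp
        | succ m =>
          rw [Nat.succ_sub_one, mul_comm]
          exact (Nat.even_mul_succ_self m).two_dvd
      have hab : (k + 1) * k = k * (k - 1) + 2 * k := by
        cases k with
        | zero => rfl
        | succ m =>
          rw [Nat.succ_sub_one]
          ring
      set P := (k + 1) * k
      set Q := k * (k - 1)
      omega
    have hAcard : A.card = k * (k - 1) / 2 := by
      rw [hAdef, Finset.card_image_of_injective _ fC_inj, hB0card]
    have hdegS : ∀ v ∈ S, (B₀.filter (fun e => v ∈ e)).card = k - 1 := by
      intro v hv
      have himg : B₀.filter (fun e => v ∈ e) = (S.erase v).image (fun u => s(v, u)) := by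
        ext e
        simp only [hB0def, Finset.mem_filter, Finset.mem_image, Finset.mem_erase]
        constructor
        · rintro ⟨⟨hes, hnd⟩, hve⟩
          refine ⟨Sym2.Mem.other' hve, ⟨?_, ?_⟩, Sym2.other_spec' hve⟩
          · intro hcon
            apply hnd
            rw [← Sym2.other_spec' hve, hcon]
            simp
          · exact Finset.mem_sym2_iff.mp hes _ (Sym2.other_mem' hve)
        · rintro ⟨u, ⟨hne, huS⟩, rfl⟩
          exact ⟨⟨Finset.mk_mem_sym2_iff.mpr ⟨hv, huS⟩,
            fun hcon => hne (Sym2.mk_isDiag_iff.mp hcon).symm⟩, Sym2.mem_mk_left v u⟩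
      rw [himg, Finset.card_image_of_injOn (fun u1 _ u2 _ he => Sym2.congr_right.mp he),
        Finset.card_erase_of_mem hv, hScard]
    refine ⟨A, hA, le_of_eq hAcard, ?_⟩
    have hvd : (contactsOf (Kc V n k ∪ A) (vdag V n k)).card = n := by
      rw [card_union_contacts hA, card_Kc_vdag, contactsOf_A_vdag hA, Finset.card_empty, Nat.add_zero, hn]
    have himg2 : S.image (orig V n k) ⊆ Finset.univ.filter (fun x : Nodes V n k =>
        (contactsOf (Kc V n k ∪ A) (vdag V n k)).card < (contactsOf (Kc V n k ∪ A) x).card) := by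
      intro x hx
      obtain ⟨v, hv, rfl⟩ := Finset.mem_image.mp hx
      refine Finset.mem_filter.mpr ⟨Finset.mem_univ _, ?_⟩
      rw [hvd, card_union_contacts hA, card_Kc_orig, hAdef, card_contactsOf_image_orig,
        hdegS v hv]
      omega
    have hkimg : (S.image (orig V n k)).card = k := by
      rw [Finset.card_image_of_injective _ orig_inj, hScard]
    exact le_trans (le_of_eq hkimg.symm) (Finset.card_le_card himg2)


end DegreeNPC
end

section
/- Let U be a finite set, let S = {S_1, …, S_m} be a finite family of subsets of U, and let k ≤ m. Construct the temporal network G = (V, K, 2) where V = {v†, z} ∪ U ∪ S ∪ {y_1, …, y_{m−k}} ∪ {x_1, …, x_{|U|+m−1}} (all listed node sets pairwise disjoint), and K = {(v†, x_i, 0) : 1 ≤ i ≤ |U|+m−1} ∪ {(z, y_i, 0) : 1 ≤ i ≤ m−k} ∪ {(u, S_j, 1) : u ∈ S_j}. Let Â = {(z, S_i, 0) : 1 ≤ i ≤ m}. Then for every A ⊆ Â and every u ∈ U: there exists a time-respecting path from z to u in G ∪ A if and only if there exists S_i with (z, S_i, 0) ∈ A and u ∈ S_i. -/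
open Finset
open scoped Classical

namespace ClosenessSetCover

variable (U : Type*) [Fintype U] (m k : ℕ) (F : Fin m → Finset U)

/-- The node set `V = {v†, z} ∪ U ∪ S ∪ {y₁,…,y_{m−k}} ∪ {x₁,…,x_{|U|+m−1}}`. -/
abbrev Nodes := (Unit ⊕ Unit) ⊕ U ⊕ Fin m ⊕ Fin (m - k) ⊕ Fin (Fintype.card U + m - 1)

/-- The evader `v†`. -/
def vdag : Nodes U m k := Sum.inl (Sum.inl ())

/-- The node `z`. -/
def zN : Nodes U m k := Sum.inl (Sum.inr ())

/-- The node of an element `u` of the universe `U`. -/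
def uN (u : U) : Nodes U m k := Sum.inr (Sum.inl u)

/-- The node of the set `Sᵢ`. -/
def sN (i : Fin m) : Nodes U m k := Sum.inr (Sum.inr (Sum.inl i))

/-- The node `yᵢ`. -/
def yN (i : Fin (m - k)) : Nodes U m k := Sum.inr (Sum.inr (Sum.inr (Sum.inl i)))

/-- The node `xᵢ`. -/
def xN (i : Fin (Fintype.card U + m - 1)) : Nodes U m k :=
  Sum.inr (Sum.inr (Sum.inr (Sum.inr i)))

/-- The contact set `K`: `v†` contacts each `xᵢ` at moment 0, `z` contacts each `yᵢ`
at moment 0, and each `u ∈ Sⱼ` contacts `Sⱼ` at moment 1. -/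
noncomputable def Kc : Finset (Contact (Nodes U m k)) :=
  (Finset.univ.image fun i : Fin (Fintype.card U + m - 1) =>
      ((s(vdag U m k, xN U m k i), 0) : Contact (Nodes U m k)))
  ∪ (Finset.univ.image fun i : Fin (m - k) =>
      ((s(zN U m k, yN U m k i), 0) : Contact (Nodes U m k)))
  ∪ (((Finset.univ : Finset (U × Fin m)).filter (fun p => p.1 ∈ F p.2)).image
      fun p => ((s(uN U m k p.1, sN U m k p.2), 1) : Contact (Nodes U m k)))

/-- The set `Â = {(z, Sᵢ, 0)}` of contacts allowed to be added. -/
noncomputable def Ahat : Finset (Contact (Nodes U m k)) :=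
  Finset.univ.image fun i : Fin m =>
    ((s(zN U m k, sN U m k i), 0) : Contact (Nodes U m k))

/-- Classification: any contact of `K ∪ A` containing an element node `uN u` is a
set-membership contact `(u, Sⱼ, 1)` with `u ∈ Sⱼ`. -/
lemma contact_of_uN {U : Type*} [Fintype U] {m k : ℕ} {F : Fin m → Finset U}
    {A : Finset (Contact (Nodes U m k))} (hA : A ⊆ Ahat U m k)
    {c : Contact (Nodes U m k)} (hc : c ∈ Kc U m k F ∪ A) {u : U}
    (hu : uN U m k u ∈ c.1) :
    ∃ j : Fin m, u ∈ F j ∧ c = (s(uN U m k u, sN U m k j), 1) := by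
  rcases Finset.mem_union.1 hc with hc | hc
  · simp only [Kc, Finset.mem_union, Finset.mem_image, Finset.mem_filter,
      Finset.mem_univ, true_and] at hc
    rcases hc with (⟨i, hi⟩ | ⟨i, hi⟩) | ⟨p, hp, hpc⟩
    · subst hi; simp [Sym2.mem_iff, vdag, xN, uN] at hu
    · subst hi; simp [Sym2.mem_iff, zN, yN, uN] at hu
    · subst hpc
      simp only [Sym2.mem_iff] at hu
      rcases hu with hu | hu
      · simp only [uN, Sum.inr.injEq, Sum.inl.injEq] at hu
        subst hu
        exact ⟨p.2, hp, rfl⟩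
      · simp [uN, sN] at hu
  · have := hA hc
    simp only [Ahat, Finset.mem_image, Finset.mem_univ, true_and] at this
    obtain ⟨i, hi⟩ := this
    subst hi
    simp [Sym2.mem_iff, zN, sN, uN] at hu

/-- Classification: any contact of `K ∪ A` at time `0` containing a set node `sN j`
must be the added contact `(z, Sⱼ, 0) ∈ A`. -/
lemma contact_of_sN_zero {U : Type*} [Fintype U] {m k : ℕ} {F : Fin m → Finset U}
    {A : Finset (Contact (Nodes U m k))} (hA : A ⊆ Ahat U m k)
    {c : Contact (Nodes U m k)} (hc : c ∈ Kc U m k F ∪ A) {j : Fin m}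
    (hj : sN U m k j ∈ c.1) (ht : c.2 = 0) :
    c = (s(zN U m k, sN U m k j), 0) ∧ c ∈ A := by
  rcases Finset.mem_union.1 hc with hc | hc
  · simp only [Kc, Finset.mem_union, Finset.mem_image, Finset.mem_filter,
      Finset.mem_univ, true_and] at hc
    rcases hc with (⟨i, hi⟩ | ⟨i, hi⟩) | ⟨p, hp, hpc⟩
    · subst hi; simp [Sym2.mem_iff, vdag, xN, sN] at hj
    · subst hi; simp [Sym2.mem_iff, zN, yN, sN] at hj
    · subst hpc; simp at ht
  · have hA' := hA hc
    simp only [Ahat, Finset.mem_image, Finset.mem_univ, true_and] at hA'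
    obtain ⟨i, hi⟩ := hA'
    subst hi
    simp only [Sym2.mem_iff] at hj
    rcases hj with hj | hj
    · simp [zN, sN] at hj
    · simp only [sN, Sum.inr.injEq, Sum.inl.injEq] at hj
      subst hj
      exact ⟨rfl, hc⟩

theorem stmt8 {U : Type*} [Fintype U] (m k : ℕ) (hk : k ≤ m) (F : Fin m → Finset U) :
    ∀ A ⊆ Ahat U m k, ∀ u : U,
      (∃ l, IsTRPathFrom (Kc U m k F ∪ A) (zN U m k) (uN U m k u) l) ↔
      (∃ i : Fin m, ((s(zN U m k, sN U m k i), 0) : Contact (Nodes U m k)) ∈ A ∧ u ∈ F i) := by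
  intro A hA u
  constructor
  · rintro ⟨l, hne, hmem, hchain, hnodup, hhead, hlast⟩
    rcases List.eq_nil_or_concat l with rfl | ⟨L, p, rfl⟩
    · exact absurd rfl hne
    simp only [List.concat_eq_append] at hmem hchain hhead hlast
    -- the last step ends at `uN u`
    have hlp : (L ++ [p]).getLast? = some p := by simp
    rw [hlp] at hlast
    have hp21 : p.2.1 = uN U m k u := by simpa using hlast
    have hpmem := hmem p (by simp)
    obtain ⟨j, hjF, hjc⟩ := contact_of_uN (u := u) hA hpmem (by rw [hp21]; simp)
    have hp1 : p.1 = sN U m k j := by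
      have h1 : s(p.1, p.2.1) = s(uN U m k u, sN U m k j) := congrArg Prod.fst hjc
      rw [hp21, Sym2.eq, Sym2.rel_iff'] at h1
      rcases h1 with h1 | h1
      · exact absurd (congrArg Prod.snd h1) (by simp [uN, sN])
      · exact (congrArg Prod.fst h1)
    have hp2 : p.2.2 = 1 := congrArg Prod.snd hjc
    rcases List.eq_nil_or_concat L with rfl | ⟨L', q, rfl⟩
    · -- single-step path: then `p.1 = zN`, contradicting `p.1 = sN j`
      have : p.1 = zN U m k := by simpa using hhead
      rw [hp1] at this
      simp [sN, zN] at this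
    · -- there is a previous step `q`
      simp only [List.concat_eq_append] at hmem hchain
      have hqp : q.2.1 = p.1 ∧ q.2.2 < p.2.2 := by
        rw [List.append_assoc] at hchain
        have := (List.isChain_append.1 hchain).2.1
        simpa using this
      have hq2 : q.2.2 = 0 := by
        have := hqp.2
        rw [hp2] at this
        omega
      have hqmem := hmem q (by simp)
      have hqj : sN U m k j ∈ (s(q.1, q.2.1) : Sym2 (Nodes U m k)) := by
        rw [hqp.1, hp1]; simp
      obtain ⟨hceq, hcA⟩ := contact_of_sN_zero (F := F) hA hqmem hqj hq2
      refine ⟨j, ?_, hjF⟩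
      rw [hq2] at hcA hceq
      rwa [hceq] at hcA
  · rintro ⟨i, hiA, hiF⟩
    refine ⟨[(zN U m k, sN U m k i, 0), (sN U m k i, uN U m k u, 1)], ?_, ?_, ?_, ?_, ?_, ?_⟩
    · simp
    · intro p hp
      simp only [List.mem_cons, List.mem_singleton, List.not_mem_nil, or_false] at hp
      rcases hp with rfl | rfl
      · exact Finset.mem_union_right _ hiA
      · refine Finset.mem_union_left _ ?_
        simp only [Kc, Finset.mem_union, Finset.mem_image, Finset.mem_filter,
          Finset.mem_univ, true_and]
        refine Or.inr ⟨(u, i), hiF, ?_⟩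
        simp [Sym2.eq_swap]
    · exact List.isChain_pair.2 ⟨rfl, Nat.zero_lt_one⟩
    · simp
    · simp
    · simp
end ClosenessSetCover
end

section
/- Let U be a finite set, let S = {S_1, …, S_m} be a finite family of subsets of U, and let k ≤ m. Construct the temporal network G = (V, K, 2) where V = {v†, z} ∪ U ∪ S ∪ {y_1, …, y_{m−k}} ∪ {x_1, …, x_{|U|+m−1}} (all listed node sets pairwise disjoint), and K = {(v†, x_i, 0) : 1 ≤ i ≤ |U|+m−1} ∪ {(z, y_i, 0) : 1 ≤ i ≤ m−k} ∪ {(u, S_j, 1) : u ∈ S_j}. Let Â = {(z, S_i, 0) : 1 ≤ i ≤ m}. Then there exists A ⊆ Â with |A| ≤ k such that for every u ∈ U there is a time-respecting path from z to u in G ∪ A, if and only if there exists a subfamily S* ⊆ S with |S*| ≤ k whose union equals U. -/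
open Finset
open scoped Classical

namespace ClosenessSetCover

variable (U : Type*) [Fintype U] (m k : ℕ) (F : Fin m → Finset U)

lemma forward_key {U : Type*} [Fintype U] (m k : ℕ) (F : Fin m → Finset U)
    {A : Finset (Contact (Nodes U m k))} (hA : A ⊆ Ahat U m k) (u : U)
    {l : List (Nodes U m k × Nodes U m k × ℕ)}
    (h : IsTRPathFrom (Kc U m k F ∪ A) (zN U m k) (uN U m k u) l) :
    ∃ j : Fin m, u ∈ F j ∧ ((s(zN U m k, sN U m k j), 0) : Contact (Nodes U m k)) ∈ A := by
  obtain ⟨hne, hmem, hchain, hnd, hhead, hlast⟩ := h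
  obtain ⟨l₁, q, rfl⟩ := List.eq_nil_or_concat l |>.resolve_left hne
  rw [List.concat_eq_append] at *
  -- last step q ends at uN u
  have hq1 : q.2.1 = uN U m k u := by
    rw [List.getLast?_concat] at hlast
    simpa using hlast
  have hqmem : ((s(q.1, q.2.1), q.2.2) : Contact (Nodes U m k)) ∈ Kc U m k F ∪ A :=
    hmem q (by simp)
  rw [Finset.mem_union] at hqmem
  -- the last contact must be (uN u, sN j, 1) with u ∈ F j
  have hqA : ((s(q.1, q.2.1), q.2.2) : Contact (Nodes U m k)) ∉ Ahat U m k := by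
    intro hcon
    simp only [Ahat, Finset.mem_image, Finset.mem_univ, true_and] at hcon
    obtain ⟨i, hi⟩ := hcon
    rw [Prod.ext_iff] at hi
    have := hi.1
    rw [hq1, Sym2.eq_iff] at this
    rcases this with ⟨h1, h2⟩ | ⟨h1, h2⟩ <;> simp [uN, zN, sN] at h1 h2
  obtain ⟨j, hj⟩ : ∃ j : Fin m, u ∈ F j ∧ q.1 = sN U m k j ∧ q.2.2 = 1 := by
    rcases hqmem with hK | hA'
    · simp only [Kc, Finset.mem_union, Finset.mem_image, Finset.mem_univ, true_and,
        Finset.mem_filter, Prod.ext_iff] at hK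
      rcases hK with (⟨i, hi, _⟩ | ⟨i, hi, _⟩) | ⟨p, hp, hi, ht⟩
      · rw [hq1, Sym2.eq_iff] at hi
        rcases hi with ⟨h1, h2⟩ | ⟨h1, h2⟩ <;> simp [uN, vdag, xN] at h1 h2
      · rw [hq1, Sym2.eq_iff] at hi
        rcases hi with ⟨h1, h2⟩ | ⟨h1, h2⟩ <;> simp [uN, zN, yN] at h1 h2
      · rw [hq1, Sym2.eq_iff] at hi
        rcases hi with ⟨h1, h2⟩ | ⟨h1, h2⟩
        · simp [uN, sN] at h2
        · refine ⟨p.2, ?_, h2.symm, ht.symm⟩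
          have : p.1 = u := by simpa [uN] using h1
          rwa [this] at hp
    · exact absurd (hA hA') hqA
  -- there is a previous step
  rcases List.eq_nil_or_concat l₁ with rfl | ⟨l₂, p, rfl⟩
  · simp only [List.nil_append, List.head?_cons, Option.map_some] at hhead
    have : q.1 = zN U m k := by simpa using hhead
    rw [hj.2.1] at this
    simp [sN, zN] at this
  · rw [List.concat_eq_append, List.append_assoc] at hchain hmem
    have hrel : p.2.1 = q.1 ∧ p.2.2 < q.2.2 := by
      replace hchain := List.isChain_append.mp hchain
      exact (List.isChain_cons_cons.mp hchain.2.1).1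
    have ht0 : p.2.2 = 0 := by
      have := hrel.2
      rw [hj.2.2] at this
      omega
    have hpmem : ((s(p.1, p.2.1), p.2.2) : Contact (Nodes U m k)) ∈ Kc U m k F ∪ A :=
      hmem p (by simp)
    rw [Finset.mem_union] at hpmem
    have hp21 : p.2.1 = sN U m k j := hrel.1.trans hj.2.1
    rcases hpmem with hK | hA'
    · exfalso
      simp only [Kc, Finset.mem_union, Finset.mem_image, Finset.mem_univ, true_and,
        Finset.mem_filter, Prod.ext_iff] at hK
      rcases hK with (⟨i, hi, _⟩ | ⟨i, hi, _⟩) | ⟨pp, hpp, hi, hti⟩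
      · rw [hp21, Sym2.eq_iff] at hi
        rcases hi with ⟨h1, h2⟩ | ⟨h1, h2⟩ <;> simp [sN, vdag, xN] at h1 h2
      · rw [hp21, Sym2.eq_iff] at hi
        rcases hi with ⟨h1, h2⟩ | ⟨h1, h2⟩ <;> simp [sN, zN, yN] at h1 h2
      · rw [ht0] at hti; exact one_ne_zero hti
    · have := hA hA'
      simp only [Ahat, Finset.mem_image, Finset.mem_univ, true_and, Prod.ext_iff] at this
      obtain ⟨i, hi, _⟩ := this
      rw [hp21, Sym2.eq_iff] at hi
      rcases hi with ⟨h1, h2⟩ | ⟨h1, h2⟩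
      · have hij : i = j := by simpa [sN] using h2
        subst hij
        refine ⟨i, hj.1, ?_⟩
        have hh : ((s(p.1, p.2.1), p.2.2) : Contact (Nodes U m k)) ∈ A := hA'
        rwa [hp21, ← h1, ht0] at hh
      · simp [sN, zN] at h1

theorem stmt9 {U : Type*} [Fintype U] (m k : ℕ) (hk : k ≤ m) (F : Fin m → Finset U) :
    (∃ A ⊆ Ahat U m k, A.card ≤ k ∧
      ∀ u : U, ∃ l, IsTRPathFrom (Kc U m k F ∪ A) (zN U m k) (uN U m k u) l) ↔
    (∃ J : Finset (Fin m), J.card ≤ k ∧ ∀ u : U, ∃ i ∈ J, u ∈ F i) := by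
  constructor
  · rintro ⟨A, hA, hcard, hpath⟩
    refine ⟨(Finset.univ : Finset (Fin m)).filter
      (fun j => ((s(zN U m k, sN U m k j), 0) : Contact (Nodes U m k)) ∈ A), ?_, ?_⟩
    · refine le_trans (Finset.card_le_card_of_injOn
        (fun j => ((s(zN U m k, sN U m k j), 0) : Contact (Nodes U m k)))
        (fun j hj => (Finset.mem_filter.mp hj).2) ?_) hcard
      intro a _ b _ hab
      rw [Prod.ext_iff, Sym2.eq_iff] at hab
      rcases hab.1 with ⟨_, h2⟩ | ⟨h1, _⟩
      · simpa [sN] using h2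
      · simp [sN, zN] at h1
    · intro u
      obtain ⟨l, hl⟩ := hpath u
      obtain ⟨j, hj1, hj2⟩ := forward_key m k F hA u hl
      exact ⟨j, Finset.mem_filter.mpr ⟨Finset.mem_univ _, hj2⟩, hj1⟩
  · rintro ⟨J, hJcard, hJ⟩
    refine ⟨J.image (fun j => ((s(zN U m k, sN U m k j), 0) : Contact (Nodes U m k))),
      ?_, le_trans Finset.card_image_le hJcard, ?_⟩
    · intro c hc
      simp only [Finset.mem_image] at hc
      obtain ⟨j, _, rfl⟩ := hc
      simp only [Ahat, Finset.mem_image, Finset.mem_univ, true_and]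
      exact ⟨j, rfl⟩
    · intro u
      obtain ⟨j, hjJ, hju⟩ := hJ u
      refine ⟨[(zN U m k, sN U m k j, 0), (sN U m k j, uN U m k u, 1)], ?_, ?_, ?_, ?_, ?_, ?_⟩
      · simp
      · intro p hp
        simp only [List.mem_cons, List.not_mem_nil, or_false] at hp
        rcases hp with rfl | rfl
        · exact Finset.mem_union_right _ (Finset.mem_image.mpr ⟨j, hjJ, rfl⟩)
        · refine Finset.mem_union_left _ ?_
          refine Finset.mem_union_right _ (Finset.mem_image.mpr ⟨(u, j), ?_, ?_⟩)
          · simp [hju]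
          · simp [Sym2.eq_swap]
      · exact List.isChain_cons_cons.mpr ⟨⟨rfl, Nat.zero_lt_one⟩, List.isChain_singleton _⟩
      · simp [Prod.ext_iff]
      · simp
      · simp

end ClosenessSetCover
end

section
/- Let U be a finite set, let S = {S_1, …, S_m} be a finite family of subsets of U, and let k ≤ m. Construct the temporal network G = (V, K, 2) where V = {v†, z} ∪ U ∪ S ∪ {y_1, …, y_{m−k}} ∪ {x_1, …, x_{|U|+m−1}} (all listed node sets pairwise disjoint), and K = {(v†, x_i, 0) : 1 ≤ i ≤ |U|+m−1} ∪ {(z, y_i, 0) : 1 ≤ i ≤ m−k} ∪ {(u, S_j, 1) : u ∈ S_j}. Let Â = {(z, S_i, 0) : 1 ≤ i ≤ m}. Then for every A ⊆ Â, the set of nodes w ≠ z such that there exists a time-respecting path from z to w in G ∪ A is exactly {y_1, …, y_{m−k}} ∪ {S_i : (z, S_i, 0) ∈ A} ∪ {u ∈ U : ∃ S_i, (z, S_i, 0) ∈ A and u ∈ S_i}. -/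
open Finset
open scoped Classical

namespace ClosenessSetCover

variable (U : Type*) [Fintype U] (m k : ℕ) (F : Fin m → Finset U)

section Helpers

variable {U : Type*} [Fintype U] {m k : ℕ} {F : Fin m → Finset U}
variable {A : Finset (Contact (Nodes U m k))}

lemma time_le_one (hA : A ⊆ Ahat U m k)
    {c : Contact (Nodes U m k)} (hc : c ∈ Kc U m k F ∪ A) : c.2 ≤ 1 := by
  rcases Finset.mem_union.mp hc with h | h
  · simp only [Kc, Finset.mem_union, Finset.mem_image] at h
    rcases h with (⟨i, _, rfl⟩ | ⟨i, _, rfl⟩) | ⟨p, _, rfl⟩ <;> simp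
  · have h2 := hA h
    simp only [Ahat, Finset.mem_image] at h2
    rcases h2 with ⟨i, _, rfl⟩; simp

lemma z_step (hA : A ⊆ Ahat U m k) {w : Nodes U m k} {t : ℕ}
    (hc : ((s(zN U m k, w), t) : Contact (Nodes U m k)) ∈ Kc U m k F ∪ A) :
    t = 0 ∧ ((∃ j, w = yN U m k j) ∨
      ∃ i, w = sN U m k i ∧
        ((s(zN U m k, sN U m k i), 0) : Contact (Nodes U m k)) ∈ A) := by
  rcases Finset.mem_union.mp hc with h | h
  · simp only [Kc, Finset.mem_union, Finset.mem_image] at h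
    rcases h with (⟨i, _, he⟩ | ⟨i, _, he⟩) | ⟨p, _, he⟩
    · exfalso
      have := (Prod.mk.injEq _ _ _ _).mp he
      rw [Sym2.eq_iff] at this
      rcases this.1 with ⟨h1, -⟩ | ⟨-, h1⟩
      · simp [vdag, zN] at h1
      · simp [xN, zN] at h1
    · have := (Prod.mk.injEq _ _ _ _).mp he
      rw [Sym2.eq_iff] at this
      refine ⟨this.2.symm, Or.inl ?_⟩
      rcases this.1 with ⟨-, h2⟩ | ⟨-, h1⟩
      · exact ⟨i, h2.symm⟩
      · simp [zN, yN] at h1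
    · exfalso
      have := (Prod.mk.injEq _ _ _ _).mp he
      rw [Sym2.eq_iff] at this
      rcases this.1 with ⟨h1, -⟩ | ⟨-, h1⟩
      · simp [uN, zN] at h1
      · simp [sN, zN] at h1
  · have h2 := hA h
    simp only [Ahat, Finset.mem_image] at h2
    rcases h2 with ⟨i, _, he⟩
    have := (Prod.mk.injEq _ _ _ _).mp he.symm
    rw [Sym2.eq_iff] at this
    rcases this.1 with ⟨-, h2⟩ | ⟨h1, -⟩
    · exact ⟨this.2, Or.inr ⟨i, h2, by rwa [← this.2, ← h2]⟩⟩
    · simp [zN, sN] at h1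

lemma one_step (hA : A ⊆ Ahat U m k) {a b : Nodes U m k}
    (hc : ((s(a, b), 1) : Contact (Nodes U m k)) ∈ Kc U m k F ∪ A) :
    ∃ u i, u ∈ F i ∧
      ((a = uN U m k u ∧ b = sN U m k i) ∨ (a = sN U m k i ∧ b = uN U m k u)) := by
  rcases Finset.mem_union.mp hc with h | h
  · simp only [Kc, Finset.mem_union, Finset.mem_image] at h
    rcases h with (⟨i, _, he⟩ | ⟨i, _, he⟩) | ⟨p, hp, he⟩
    · exact absurd ((Prod.mk.injEq _ _ _ _).mp he).2 (by simp)
    · exact absurd ((Prod.mk.injEq _ _ _ _).mp he).2 (by simp)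
    · simp only [Finset.mem_filter] at hp
      have := (Prod.mk.injEq _ _ _ _).mp he
      rw [Sym2.eq_iff] at this
      rcases this.1 with ⟨h1, h2⟩ | ⟨h1, h2⟩
      · exact ⟨p.1, p.2, hp.2, Or.inl ⟨h1.symm, h2.symm⟩⟩
      · exact ⟨p.1, p.2, hp.2, Or.inr ⟨h2.symm, h1.symm⟩⟩
  · exfalso
    have h2 := hA h
    simp only [Ahat, Finset.mem_image] at h2
    rcases h2 with ⟨i, _, he⟩
    exact absurd ((Prod.mk.injEq _ _ _ _).mp he).2 (by simp)

end Helpers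

theorem stmt10 {U : Type*} [Fintype U] (m k : ℕ) (hk : k ≤ m) (F : Fin m → Finset U) :
    ∀ A ⊆ Ahat U m k, ∀ x : Nodes U m k,
      (x ≠ zN U m k ∧ ∃ l, IsTRPathFrom (Kc U m k F ∪ A) (zN U m k) x l) ↔
      ((∃ j : Fin (m - k), x = yN U m k j) ∨
       (∃ i : Fin m, x = sN U m k i ∧
          ((s(zN U m k, sN U m k i), 0) : Contact (Nodes U m k)) ∈ A) ∨
       (∃ u : U, x = uN U m k u ∧
          ∃ i : Fin m, ((s(zN U m k, sN U m k i), 0) : Contact (Nodes U m k)) ∈ A ∧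
            u ∈ F i)) := by
  intro A hA x
  constructor
  · rintro ⟨hxz, l, hne, hmem, hchain, hnodup, hhead, hlast⟩
    match l with
    | [] => exact absurd rfl hne
    | p :: rest =>
      simp only [List.head?, Option.map_some, Option.some.injEq] at hhead
      have hp1 : p.1 = zN U m k := hhead
      have hpK := hmem p List.mem_cons_self
      rw [hp1] at hpK
      obtain ⟨ht0, hcases⟩ := z_step hA hpK
      rcases hcases with ⟨j, hj⟩ | ⟨i, hi, hiA⟩
      · -- first step goes to y j; path must end there
        match rest with
        | [] =>
          have hl : ([p].getLast?) = some p := rfl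
          rw [hl, Option.map_some, Option.some.injEq] at hlast
          exact Or.inl ⟨j, by rw [← hlast, hj]⟩
        | q :: rest2 =>
          exfalso
          have hcq := List.isChain_cons_cons.mp hchain
          have hq1 : q.1 = yN U m k j := by rw [← hcq.1.1, hj]
          have hqt : q.2.2 = 1 := by
            have h1 : q.2.2 ≤ 1 := time_le_one hA (hmem q (by simp))
            have h2 : 0 < q.2.2 := ht0 ▸ hcq.1.2
            omega
          have hqK := hmem q (by simp)
          rw [hq1, hqt] at hqK
          obtain ⟨u, i, _, hor⟩ := one_step hA hqK
          rcases hor with ⟨h1, _⟩ | ⟨h1, _⟩ <;> simp [yN, uN, sN] at h1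
      · -- first step goes to S i
        match rest with
        | [] =>
          have hl : ([p].getLast?) = some p := rfl
          rw [hl, Option.map_some, Option.some.injEq] at hlast
          exact Or.inr (Or.inl ⟨i, by rw [← hlast, hi], hiA⟩)
        | q :: rest2 =>
          have hcq := List.isChain_cons_cons.mp hchain
          have hq1 : q.1 = sN U m k i := by rw [← hcq.1.1, hi]
          have hqt : q.2.2 = 1 := by
            have h1 : q.2.2 ≤ 1 := time_le_one hA (hmem q (by simp))
            have h2 : 0 < q.2.2 := ht0 ▸ hcq.1.2
            omega
          have hqK := hmem q (by simp)
          rw [hq1, hqt] at hqK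
          obtain ⟨u, i', hu, hor⟩ := one_step hA hqK
          rcases hor with ⟨h1, _⟩ | ⟨h1, h2⟩
          · exfalso; simp [uN, sN] at h1
          · have hii : i' = i := by simpa [sN] using h1.symm
            subst hii
            match rest2 with
            | [] =>
              have hl : ([p, q].getLast?) = some q := rfl
              rw [hl, Option.map_some, Option.some.injEq] at hlast
              exact Or.inr (Or.inr ⟨u, by rw [← hlast, h2], i', hiA, hu⟩)
            | r :: rest3 =>
              exfalso
              have hcr := (List.isChain_cons_cons.mp hcq.2).1
              have h1 : r.2.2 ≤ 1 := time_le_one hA (hmem r (by simp))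
              have h2 : q.2.2 < r.2.2 := hcr.2
              omega
  · rintro (⟨j, rfl⟩ | ⟨i, rfl, hiA⟩ | ⟨u, rfl, i, hiA, hu⟩)
    · refine ⟨by simp [yN, zN], [(zN U m k, yN U m k j, 0)], by simp, ?_, by simp [List.Chain'], by simp,
        by simp, by simp⟩
      intro p hp
      simp only [List.mem_singleton] at hp
      subst hp
      exact Finset.mem_union_left _ (by
        simp only [Kc, Finset.mem_union, Finset.mem_image]
        exact Or.inl (Or.inr ⟨j, Finset.mem_univ _, rfl⟩))
    · refine ⟨by simp [sN, zN], [(zN U m k, sN U m k i, 0)], by simp, ?_, by simp [List.Chain'], by simp,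
        by simp, by simp⟩
      intro p hp
      simp only [List.mem_singleton] at hp
      subst hp
      exact Finset.mem_union_right _ hiA
    · refine ⟨by simp [uN, zN],
        [(zN U m k, sN U m k i, 0), (sN U m k i, uN U m k u, 1)], by simp, ?_,
        by simp [List.Chain'], by simp, by simp, by simp⟩
      rintro p hp
      rcases List.mem_pair.mp hp with rfl | rfl
      · exact Finset.mem_union_right _ hiA
      · refine Finset.mem_union_left _ ?_
        simp only [Kc, Finset.mem_union, Finset.mem_image]
        refine Or.inr ⟨(u, i), by simpa using hu, ?_⟩
        rw [Sym2.eq_swap]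


end ClosenessSetCover
end

section
/- Let U be a finite set, let S = {S_1, …, S_m} be a finite family of subsets of U with |S_i| < |U| for every i, and construct the temporal network G = (V, K, 3) where V = {v†, z} ∪ U ∪ S ∪ {w_1, …, w_{|U|}} ∪ {x_1, …, x_{|U|+1}} ∪ {y_1, …, y_{|U|−1}} (all listed node sets pairwise disjoint), and K = {(v†, x_i, 0) : all i} ∪ {(v†, y_i, 2) : all i} ∪ {(z, w_i, 0) : all i} ∪ {(w_i, w_j, 2) : i ≠ j} ∪ {(w_i, S_j, 2) : all i, j} ∪ {(z, S_i, 2) : all i} ∪ {(S_i, S_j, 2) : i ≠ j} ∪ {(u, S_j, 2) : u ∈ S_j}. Let Â = {(z, S_i, 1) : 1 ≤ i ≤ m}. Then for every A ⊆ Â, every i ∈ {1, …, |U|+1}, and every j ∈ {1, …, |U|−1}, the unique time-respecting path from x_i to y_j in G ∪ A is ⟨(x_i, v†, 0), (v†, y_j, 2)⟩; in particular, every time-respecting path from x_i to y_j passes through v†. -/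
open Finset
open scoped Classical

namespace BetweennessApprox

variable (U : Type*) [Fintype U] (m : ℕ) (F : Fin m → Finset U)

/-- The node set
`V = {v†, z} ∪ U ∪ S ∪ {w₁,…,w_{|U|}} ∪ {x₁,…,x_{|U|+1}} ∪ {y₁,…,y_{|U|−1}}`. -/
abbrev Nodes :=
  (Unit ⊕ Unit) ⊕ U ⊕ Fin m ⊕ Fin (Fintype.card U) ⊕
    Fin (Fintype.card U + 1) ⊕ Fin (Fintype.card U - 1)

/-- The evader `v†`. -/
def vdag : Nodes U m := Sum.inl (Sum.inl ())

/-- The node `z`. -/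
def zN : Nodes U m := Sum.inl (Sum.inr ())

/-- The node of an element `u` of the universe `U`. -/
def uN (u : U) : Nodes U m := Sum.inr (Sum.inl u)

/-- The node of the set `Sᵢ`. -/
def sN (i : Fin m) : Nodes U m := Sum.inr (Sum.inr (Sum.inl i))

/-- The node `wᵢ`. -/
def wN (i : Fin (Fintype.card U)) : Nodes U m := Sum.inr (Sum.inr (Sum.inr (Sum.inl i)))

/-- The node `xᵢ`. -/
def xN (i : Fin (Fintype.card U + 1)) : Nodes U m :=
  Sum.inr (Sum.inr (Sum.inr (Sum.inr (Sum.inl i))))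

/-- The node `yᵢ`. -/
def yN (i : Fin (Fintype.card U - 1)) : Nodes U m :=
  Sum.inr (Sum.inr (Sum.inr (Sum.inr (Sum.inr i))))

/-- The contact set `K` of the constructed temporal network. -/
noncomputable def Kc : Finset (Contact (Nodes U m)) :=
  (Finset.univ.image fun i : Fin (Fintype.card U + 1) =>
      ((s(vdag U m, xN U m i), 0) : Contact (Nodes U m)))
  ∪ (Finset.univ.image fun i : Fin (Fintype.card U - 1) =>
      ((s(vdag U m, yN U m i), 2) : Contact (Nodes U m)))
  ∪ (Finset.univ.image fun i : Fin (Fintype.card U) =>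
      ((s(zN U m, wN U m i), 0) : Contact (Nodes U m)))
  ∪ (((Finset.univ : Finset (Fin (Fintype.card U) × Fin (Fintype.card U))).filter
        (fun p => p.1 ≠ p.2)).image
      fun p => ((s(wN U m p.1, wN U m p.2), 2) : Contact (Nodes U m)))
  ∪ ((Finset.univ : Finset (Fin (Fintype.card U) × Fin m)).image
      fun p => ((s(wN U m p.1, sN U m p.2), 2) : Contact (Nodes U m)))
  ∪ (Finset.univ.image fun i : Fin m =>
      ((s(zN U m, sN U m i), 2) : Contact (Nodes U m)))
  ∪ (((Finset.univ : Finset (Fin m × Fin m)).filter (fun p => p.1 ≠ p.2)).image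
      fun p => ((s(sN U m p.1, sN U m p.2), 2) : Contact (Nodes U m)))
  ∪ (((Finset.univ : Finset (U × Fin m)).filter (fun p => p.1 ∈ F p.2)).image
      fun p => ((s(uN U m p.1, sN U m p.2), 2) : Contact (Nodes U m)))

/-- The set `Â = {(z, Sᵢ, 1)}` of contacts allowed to be added. -/
noncomputable def Ahat : Finset (Contact (Nodes U m)) :=
  Finset.univ.image fun i : Fin m =>
    ((s(zN U m, sN U m i), 1) : Contact (Nodes U m))

lemma mem_cases {U : Type*} [Fintype U] {m : ℕ} {F : Fin m → Finset U}
    {A : Finset (Contact (Nodes U m))} (hA : A ⊆ Ahat U m)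
    {c : Contact (Nodes U m)} (h : c ∈ Kc U m F ∪ A) :
    (∃ i, c = (s(vdag U m, xN U m i), 0)) ∨
    (∃ j, c = (s(vdag U m, yN U m j), 2)) ∨
    (∃ i, c = (s(zN U m, wN U m i), 0)) ∨
    (∃ p : Fin (Fintype.card U) × Fin (Fintype.card U), c = (s(wN U m p.1, wN U m p.2), 2)) ∨
    (∃ p : Fin (Fintype.card U) × Fin m, c = (s(wN U m p.1, sN U m p.2), 2)) ∨
    (∃ i, c = (s(zN U m, sN U m i), 2)) ∨
    (∃ p : Fin m × Fin m, c = (s(sN U m p.1, sN U m p.2), 2)) ∨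
    (∃ p : U × Fin m, c = (s(uN U m p.1, sN U m p.2), 2)) ∨
    (∃ i, c = (s(zN U m, sN U m i), 1)) := by
  rcases Finset.mem_union.1 h with h | h
  · simp only [Kc, Finset.mem_union, Finset.mem_image, Finset.mem_filter, Finset.mem_univ,
      true_and] at h
    rcases h with ((((((h | h) | h) | h) | h) | h) | h) | h <;>
      [ (exact Or.inl ⟨_, (h.choose_spec).symm⟩);
        (exact Or.inr (Or.inl ⟨_, (h.choose_spec).symm⟩));
        (exact Or.inr (Or.inr (Or.inl ⟨_, (h.choose_spec).symm⟩)));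
        (exact Or.inr (Or.inr (Or.inr (Or.inl ⟨_, (h.choose_spec).2.symm⟩))));
        (exact Or.inr (Or.inr (Or.inr (Or.inr (Or.inl ⟨_, (h.choose_spec).symm⟩)))));
        (exact Or.inr (Or.inr (Or.inr (Or.inr (Or.inr (Or.inl ⟨_, (h.choose_spec).symm⟩))))));
        (exact Or.inr (Or.inr (Or.inr (Or.inr (Or.inr (Or.inr (Or.inl
          ⟨_, (h.choose_spec).2.symm⟩)))))));
        (exact Or.inr (Or.inr (Or.inr (Or.inr (Or.inr (Or.inr (Or.inr (Or.inl
          ⟨_, (h.choose_spec).2.symm⟩))))))))]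
  · have h' := hA h
    simp only [Ahat, Finset.mem_image, Finset.mem_univ, true_and] at h'
    exact Or.inr (Or.inr (Or.inr (Or.inr (Or.inr (Or.inr (Or.inr (Or.inr
      ⟨_, (h'.choose_spec).symm⟩)))))))

lemma step_x {U : Type*} [Fintype U] {m : ℕ} {F : Fin m → Finset U}
    {A : Finset (Contact (Nodes U m))} (hA : A ⊆ Ahat U m)
    {b : Nodes U m} {t : ℕ} (i : Fin (Fintype.card U + 1))
    (h : ((s(xN U m i, b), t) : Contact (Nodes U m)) ∈ Kc U m F ∪ A) :
    b = vdag U m ∧ t = 0 := by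
  rcases mem_cases hA h with ⟨k, hk⟩ | ⟨k, hk⟩ | ⟨k, hk⟩ | ⟨k, hk⟩ | ⟨k, hk⟩ | ⟨k, hk⟩ |
    ⟨k, hk⟩ | ⟨k, hk⟩ | ⟨k, hk⟩ <;>
    simp only [Prod.mk.injEq, Sym2.eq_iff, vdag, zN, uN, sN, wN, xN, yN] at hk <;>
    aesop

lemma step_y {U : Type*} [Fintype U] {m : ℕ} {F : Fin m → Finset U}
    {A : Finset (Contact (Nodes U m))} (hA : A ⊆ Ahat U m)
    {b : Nodes U m} {t : ℕ} (j : Fin (Fintype.card U - 1))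
    (h : ((s(yN U m j, b), t) : Contact (Nodes U m)) ∈ Kc U m F ∪ A) :
    b = vdag U m ∧ t = 2 := by
  rcases mem_cases hA h with ⟨k, hk⟩ | ⟨k, hk⟩ | ⟨k, hk⟩ | ⟨k, hk⟩ | ⟨k, hk⟩ | ⟨k, hk⟩ |
    ⟨k, hk⟩ | ⟨k, hk⟩ | ⟨k, hk⟩ <;>
    simp only [Prod.mk.injEq, Sym2.eq_iff, vdag, zN, uN, sN, wN, xN, yN] at hk <;>
    aesop

lemma step_vdag {U : Type*} [Fintype U] {m : ℕ} {F : Fin m → Finset U}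
    {A : Finset (Contact (Nodes U m))} (hA : A ⊆ Ahat U m)
    {b : Nodes U m} {t : ℕ}
    (h : ((s(vdag U m, b), t) : Contact (Nodes U m)) ∈ Kc U m F ∪ A) :
    (∃ i, b = xN U m i ∧ t = 0) ∨ (∃ j, b = yN U m j ∧ t = 2) := by
  rcases mem_cases hA h with ⟨k, hk⟩ | ⟨k, hk⟩ | ⟨k, hk⟩ | ⟨k, hk⟩ | ⟨k, hk⟩ | ⟨k, hk⟩ |
    ⟨k, hk⟩ | ⟨k, hk⟩ | ⟨k, hk⟩ <;>
    simp only [Prod.mk.injEq, Sym2.eq_iff, vdag, zN, uN, sN, wN, xN, yN] at hk <;>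
    aesop

theorem stmt12 {U : Type*} [Fintype U] (m : ℕ) (F : Fin m → Finset U)
    (hF : ∀ i : Fin m, (F i).card < Fintype.card U) :
    ∀ A ⊆ Ahat U m, ∀ i : Fin (Fintype.card U + 1), ∀ j : Fin (Fintype.card U - 1),
      IsTRPathFrom (Kc U m F ∪ A) (xN U m i) (yN U m j)
        [(xN U m i, vdag U m, 0), (vdag U m, yN U m j, 2)] ∧
      (∀ l, IsTRPathFrom (Kc U m F ∪ A) (xN U m i) (yN U m j) l →
        l = [(xN U m i, vdag U m, 0), (vdag U m, yN U m j, 2)]) ∧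
      (∀ l, IsTRPathFrom (Kc U m F ∪ A) (xN U m i) (yN U m j) l →
        PassesThrough (vdag U m) l) := by
  intro A hA i j
  have hxv : ((s(xN U m i, vdag U m), 0) : Contact (Nodes U m)) ∈ Kc U m F ∪ A := by
    refine Finset.mem_union.2 (Or.inl ?_)
    simp only [Kc, Finset.mem_union, Finset.mem_image, Finset.mem_univ, true_and]
    exact Or.inl (Or.inl (Or.inl (Or.inl (Or.inl (Or.inl (Or.inl
      ⟨i, by rw [Sym2.eq_swap]⟩))))))
  have hvy : ((s(vdag U m, yN U m j), 2) : Contact (Nodes U m)) ∈ Kc U m F ∪ A := by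
    refine Finset.mem_union.2 (Or.inl ?_)
    simp only [Kc, Finset.mem_union, Finset.mem_image, Finset.mem_univ, true_and]
    exact Or.inl (Or.inl (Or.inl (Or.inl (Or.inl (Or.inl (Or.inr ⟨j, rfl⟩))))))
  have huniq : ∀ l, IsTRPathFrom (Kc U m F ∪ A) (xN U m i) (yN U m j) l →
      l = [(xN U m i, vdag U m, 0), (vdag U m, yN U m j, 2)] := by
    intro l hl
    obtain ⟨hne, hK, hchain, hnodup, hhead, hlast⟩ := hl
    match l with
    | [] => exact absurd rfl hne
    | (pa, pb, pt) :: rest =>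
      simp only [List.head?_cons, Option.map_some, Option.some.injEq] at hhead
      subst hhead
      obtain ⟨hpb, hpt⟩ := step_x hA i (hK _ List.mem_cons_self)
      subst hpb; subst hpt
      match rest with
      | [] =>
        simp only [List.getLast?_singleton, Option.map_some, Option.some.injEq] at hlast
        exact absurd hlast (by simp [vdag, yN])
      | (qa, qb, qt) :: rest2 =>
        rw [List.Chain', List.isChain_cons_cons] at hchain
        obtain ⟨⟨hqa, hqt⟩, hchain⟩ := hchain
        simp only at hqa hqt
        subst hqa
        rcases step_vdag hA (hK _ (List.mem_cons_of_mem _ List.mem_cons_self)) with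
          ⟨k, hqb, hqt0⟩ | ⟨k, hqb, hqt2⟩
        · simp only at hqt0; omega
        · subst hqb; subst hqt2
          match rest2 with
          | [] =>
            simp only [List.getLast?_cons_cons, List.getLast?_singleton, Option.map_some,
              Option.some.injEq] at hlast
            rw [hlast]
          | (ra, rb, rt) :: rest3 =>
            rw [List.isChain_cons_cons] at hchain
            obtain ⟨⟨hra, hrt⟩, _⟩ := hchain
            simp only at hra hrt
            subst hra
            have hry := (step_y hA k (hK (yN U m k, rb, rt) (by simp))).2
            simp only at hry
            omega
  refine ⟨⟨by simp, ?_, ?_, ?_, rfl, rfl⟩, huniq, ?_⟩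
  · intro p hp
    simp only [List.mem_cons, List.not_mem_nil, or_false] at hp
    rcases hp with rfl | rfl
    · exact hxv
    · exact hvy
  · exact List.isChain_cons_cons.2 ⟨⟨rfl, by norm_num⟩, List.isChain_singleton _⟩
  · simp
  · intro l hl
    rw [huniq l hl]
    exact ⟨(xN U m i, vdag U m, 0), List.mem_cons_self, Or.inr rfl⟩

end BetweennessApprox
end

section
/- Let U be a finite set, let S = {S_1, …, S_m} be a finite family of subsets of U, let k ∈ ℕ, and construct the temporal network G = (V, K, 3) where V = {v†, w, y, z} ∪ U ∪ S ∪ {x_1, …, x_{|U|+k−1}} (all listed node sets pairwise disjoint), and K = {(z, w, 0), (v†, y, 0)} ∪ {(v†, x_i, 1) : 1 ≤ i ≤ |U|+k−1} ∪ {(u, S_j, 2) : u ∈ S_j}. Let Â = {(z, S_i, 1) : 1 ≤ i ≤ m}. Then for every A ⊆ Â: every time-respecting path in G ∪ A starting at w has (w, z, 0) as its first contact (and hence passes through z), and for every u ∈ U there exists a time-respecting path from w to u in G ∪ A if and only if there exists S_i with (z, S_i, 1) ∈ A and u ∈ S_i. -/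
open Finset
open scoped Classical

namespace BetweennessNPC

variable (U : Type*) [Fintype U] (m k : ℕ) (F : Fin m → Finset U)

/-- The node set `V = {v†, w, y, z} ∪ U ∪ S ∪ {x₁,…,x_{|U|+k−1}}`. -/
abbrev Nodes :=
  ((Unit ⊕ Unit) ⊕ (Unit ⊕ Unit)) ⊕ U ⊕ Fin m ⊕ Fin (Fintype.card U + k - 1)

/-- The evader `v†`. -/
def vdag : Nodes U m k := Sum.inl (Sum.inl (Sum.inl ()))

/-- The node `w`. -/
def wN : Nodes U m k := Sum.inl (Sum.inl (Sum.inr ()))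

/-- The node `y`. -/
def yN : Nodes U m k := Sum.inl (Sum.inr (Sum.inl ()))

/-- The node `z`. -/
def zN : Nodes U m k := Sum.inl (Sum.inr (Sum.inr ()))

/-- The node of an element `u` of the universe `U`. -/
def uN (u : U) : Nodes U m k := Sum.inr (Sum.inl u)

/-- The node of the set `Sᵢ`. -/
def sN (i : Fin m) : Nodes U m k := Sum.inr (Sum.inr (Sum.inl i))

/-- The node `xᵢ`. -/
def xN (i : Fin (Fintype.card U + k - 1)) : Nodes U m k :=
  Sum.inr (Sum.inr (Sum.inr i))

/-- The contact set
`K = {(z,w,0), (v†,y,0)} ∪ {(v†,xᵢ,1)} ∪ {(u,Sⱼ,2) : u ∈ Sⱼ}`. -/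
noncomputable def Kc : Finset (Contact (Nodes U m k)) :=
  ({((s(zN U m k, wN U m k), 0) : Contact (Nodes U m k)),
    ((s(vdag U m k, yN U m k), 0) : Contact (Nodes U m k))} : Finset (Contact (Nodes U m k)))
  ∪ (Finset.univ.image fun i : Fin (Fintype.card U + k - 1) =>
      ((s(vdag U m k, xN U m k i), 1) : Contact (Nodes U m k)))
  ∪ (((Finset.univ : Finset (U × Fin m)).filter (fun p => p.1 ∈ F p.2)).image
      fun p => ((s(uN U m k p.1, sN U m k p.2), 2) : Contact (Nodes U m k)))

/-- The set `Â = {(z, Sᵢ, 1)}` of contacts allowed to be added. -/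
noncomputable def Ahat : Finset (Contact (Nodes U m k)) :=
  Finset.univ.image fun i : Fin m =>
    ((s(zN U m k, sN U m k i), 1) : Contact (Nodes U m k))

lemma mem_union_iff {U : Type*} [Fintype U] {m k : ℕ} (F : Fin m → Finset U)
    {A : Finset (Contact (Nodes U m k))} (hA : A ⊆ Ahat U m k)
    (c : Contact (Nodes U m k)) (hc : c ∈ Kc U m k F ∪ A) :
    c = (s(zN U m k, wN U m k), 0) ∨ c = (s(vdag U m k, yN U m k), 0) ∨
    (∃ i, c = (s(vdag U m k, xN U m k i), 1)) ∨
    (∃ p : U × Fin m, p.1 ∈ F p.2 ∧ c = (s(uN U m k p.1, sN U m k p.2), 2)) ∨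
    (∃ i, c = (s(zN U m k, sN U m k i), 1) ∧ c ∈ A) := by
  rcases Finset.mem_union.1 hc with h | h
  · simp only [Kc, Finset.mem_union, Finset.mem_insert, Finset.mem_singleton,
      Finset.mem_image, Finset.mem_filter, Finset.mem_univ, true_and] at h
    rcases h with ((h | h) | ⟨i, hi⟩) | ⟨p, hp, hpe⟩
    · exact Or.inl h
    · exact Or.inr (Or.inl h)
    · exact Or.inr (Or.inr (Or.inl ⟨i, hi.symm⟩))
    · exact Or.inr (Or.inr (Or.inr (Or.inl ⟨p, hp, hpe.symm⟩)))
  · have h2 := hA h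
    simp only [Ahat, Finset.mem_image, Finset.mem_univ, true_and] at h2
    obtain ⟨i, hi⟩ := h2
    exact Or.inr (Or.inr (Or.inr (Or.inr ⟨i, hi.symm, h⟩)))

theorem stmt13 {U : Type*} [Fintype U] (m k : ℕ) (F : Fin m → Finset U) :
    ∀ A ⊆ Ahat U m k,
      (∀ (x : Nodes U m k) (l : List (Nodes U m k × Nodes U m k × ℕ)),
        IsTRPathFrom (Kc U m k F ∪ A) (wN U m k) x l →
          l.head? = some (wN U m k, zN U m k, 0) ∧ PassesThrough (zN U m k) l) ∧
      (∀ u : U,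
        (∃ l, IsTRPathFrom (Kc U m k F ∪ A) (wN U m k) (uN U m k u) l) ↔
        (∃ i : Fin m, ((s(zN U m k, sN U m k i), 1) : Contact (Nodes U m k)) ∈ A ∧
          u ∈ F i)) := by
  intro A hA
  have hmem := mem_union_iff F hA
  -- first step of any path from w is (w, z, 0)
  have hfirst : ∀ (x : Nodes U m k) (l : List (Nodes U m k × Nodes U m k × ℕ)),
      IsTRPathFrom (Kc U m k F ∪ A) (wN U m k) x l →
        l.head? = some (wN U m k, zN U m k, 0) := by
    intro x l hl
    obtain ⟨hne, hK, hchain, hnd, hhead, hlast⟩ := hl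
    match l, hne with
    | (a, b, t) :: rest, _ =>
      simp only [List.head?, Option.map_some] at hhead ⊢
      have ha : a = wN U m k := by simpa using hhead
      subst ha
      have hc := hmem _ (hK _ (List.mem_cons_self))
      simp only at hc
      rcases hc with h | h | ⟨i, h⟩ | ⟨p, hp, h⟩ | ⟨i, h, hmemA⟩
      · simp only [Prod.mk.injEq, Sym2.eq_iff, wN, zN, Sum.inl.injEq, Sum.inr.injEq,
          reduceCtorEq, false_and, and_false, false_or, or_false, and_true, true_and] at h
        obtain ⟨hb, ht⟩ := h
        simp [hb, ht, wN, zN]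
      · exfalso
        simp [Prod.mk.injEq, Sym2.eq_iff, wN, vdag, yN] at h
      · exfalso
        simp [Prod.mk.injEq, Sym2.eq_iff, wN, vdag, xN] at h
      · exfalso
        simp [Prod.mk.injEq, Sym2.eq_iff, wN, uN, sN] at h
      · exfalso
        simp [Prod.mk.injEq, Sym2.eq_iff, wN, zN, sN] at h
  constructor
  · intro x l hl
    have h1 := hfirst x l hl
    refine ⟨h1, ?_⟩
    obtain ⟨hne, _, _, _, _, _⟩ := hl
    match l, hne with
    | p :: rest, _ =>
      simp only [List.head?, Option.some.injEq] at h1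
      exact ⟨p, List.mem_cons_self, Or.inr (by rw [h1])⟩
  · intro u
    constructor
    · rintro ⟨l, hl⟩
      have h1 := hfirst _ l hl
      obtain ⟨hne, hK, hchain, hnd, hhead, hlast⟩ := hl
      match l, hne with
      | p1 :: rest, _ =>
        simp only [List.head?, Option.some.injEq] at h1
        subst h1
        match rest with
        | [] =>
          simp only [List.getLast?, Option.map_some] at hlast
          exfalso
          have : zN U m k = uN U m k u := by simpa using hlast
          simp [zN, uN] at this
        | p2 :: rest2 =>
          obtain ⟨⟨hp21, hp2t⟩, hchain2⟩ := List.isChain_cons_cons.1 hchain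
          obtain ⟨a2, b2, t2⟩ := p2
          simp only at hp21 hp2t
          subst hp21
          have hc2 := hmem _ (hK (zN U m k, b2, t2) (by simp))
          simp only at hc2
          rcases hc2 with h | h | ⟨i, h⟩ | ⟨p, hp, h⟩ | ⟨i, h, hmemA⟩
          · exfalso
            simp only [Prod.mk.injEq, Sym2.eq_iff, wN, zN, Sum.inl.injEq, Sum.inr.injEq,
              reduceCtorEq, false_and, and_false, false_or, or_false, and_true,
              true_and] at h
            omega
          · exfalso
            simp [Prod.mk.injEq, Sym2.eq_iff, zN, vdag, yN] at h
          · exfalso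
            simp [Prod.mk.injEq, Sym2.eq_iff, zN, vdag, xN] at h
          · exfalso
            simp [Prod.mk.injEq, Sym2.eq_iff, zN, uN, sN] at h
          · simp only [Prod.mk.injEq, Sym2.eq_iff, zN, sN, Sum.inl.injEq, Sum.inr.injEq,
              reduceCtorEq, false_and, and_false, false_or, or_false, and_true,
              true_and] at h
            obtain ⟨hb2, ht2⟩ := h
            subst ht2
            have hb2' : b2 = sN U m k i := by simp [sN, hb2]
            subst hb2'
            match rest2 with
            | [] =>
              exfalso
              have hl' : (sN U m k i : Nodes U m k) = uN U m k u := by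
                simpa [List.getLast?] using hlast
              simp [sN, uN] at hl'
            | p3 :: rest3 =>
              obtain ⟨⟨hp31, hp3t⟩, hchain3⟩ := List.isChain_cons_cons.1 hchain2
              obtain ⟨a3, b3, t3⟩ := p3
              simp only at hp31 hp3t
              subst hp31
              have hc3 := hmem _ (hK (sN U m k i, b3, t3) (by simp))
              simp only at hc3
              rcases hc3 with h | h | ⟨j, h⟩ | ⟨p, hp, h⟩ | ⟨j, h, hmemA'⟩
              · exfalso
                simp [Prod.mk.injEq, Sym2.eq_iff, zN, wN, sN] at h
              · exfalso
                simp [Prod.mk.injEq, Sym2.eq_iff, vdag, yN, sN] at h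
              · exfalso
                simp [Prod.mk.injEq, Sym2.eq_iff, vdag, xN, sN] at h
              · simp only [Prod.mk.injEq, Sym2.eq_iff, uN, sN, Sum.inl.injEq, Sum.inr.injEq,
                  reduceCtorEq, false_and, and_false, false_or, or_false, and_true,
                  true_and] at h
                obtain ⟨⟨hij, hb3⟩, ht3⟩ := h
                subst ht3
                have hb3' : b3 = uN U m k p.1 := by simp [uN, hb3]
                have hij' : i = p.2 := hij
                subst hb3'
                match rest3 with
                | [] =>
                  have hl' : uN U m k p.1 = uN U m k u := by
                    simpa [List.getLast?] using hlast
                  have hpu : p.1 = u := by simpa [uN] using hl'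
                  refine ⟨i, ?_, ?_⟩
                  · simpa only using hmemA
                  · rw [hij']; rw [hpu] at hp; exact hp
                | p4 :: rest4 =>
                  exfalso
                  obtain ⟨⟨hp41, hp4t⟩, _⟩ := List.isChain_cons_cons.1 hchain3
                  obtain ⟨a4, b4, t4⟩ := p4
                  simp only at hp41 hp4t
                  have hc4 := hmem _ (hK (a4, b4, t4) (by simp))
                  simp only at hc4
                  rcases hc4 with h4 | h4 | ⟨j4, h4⟩ | ⟨q, hq, h4⟩ | ⟨j4, h4, _⟩ <;>
                    (have ht4 : t4 ≤ 2 := by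
                      simp only [Prod.mk.injEq] at h4; omega) <;> omega
              · exfalso
                simp only [Prod.mk.injEq, Sym2.eq_iff, zN, sN, Sum.inl.injEq, Sum.inr.injEq,
                  reduceCtorEq, false_and, and_false, false_or, or_false, and_true,
                  true_and] at h
                omega
    · rintro ⟨i, hiA, hu⟩
      refine ⟨[(wN U m k, zN U m k, 0), (zN U m k, sN U m k i, 1),
        (sN U m k i, uN U m k u, 2)], ?_, ?_, ?_, ?_, ?_, ?_⟩
      · simp
      · intro p hp
        simp only [List.mem_cons, List.not_mem_nil, or_false] at hp
        rcases hp with h | h | h <;> subst h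
        · refine Finset.mem_union_left _ ?_
          simp only [Kc, Finset.mem_union, Finset.mem_insert, Finset.mem_singleton]
          left; left; left
          rw [Sym2.eq_swap]
        · exact Finset.mem_union_right _ hiA
        · refine Finset.mem_union_left _ ?_
          simp only [Kc, Finset.mem_union]
          right
          refine Finset.mem_image.2 ⟨(u, i), ?_, ?_⟩
          · simp [hu]
          · simp [Sym2.eq_swap]
      · simp [List.Chain', List.isChain_cons_cons]
      · simp only [List.map_cons, List.map_nil, List.nodup_cons, List.mem_cons,
          List.not_mem_nil, or_false, List.nodup_nil, and_true, List.mem_singleton]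
        refine ⟨?_, ?_⟩
        · simp only [Prod.mk.injEq, not_or]
          constructor <;> simp
        · simp [Prod.mk.injEq]
      · simp
      · simp

end BetweennessNPC
end
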